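/- arXiv:2207.05307 — 2 statements merged into one kernel-verified Lean document; each statement's English description precedes it below -/
import Mathlib

section
/- If for generic a ∈ ℂ^m one has (a^F)^F ∩ a^F = {0}, then F is T-nondegenerate. -/
open Matrix Complex

/-- The standard Hermitian inner product on `ℂ^m`: `⟪a,b⟫ = ∑ l, a l * conj (b l)`. -/
noncomputable def hermInner {m : ℕ} (a b : Fin m → ℂ) : ℂ :=
  ∑ l, a l * (starRingEnd ℂ) (b l)

/-- The `ℂ^k`-valued Hermitian form `F(z,ζ) = (⟪A₁ z, ζ⟫, …, ⟪A_k z, ζ⟫)`. -/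
noncomputable def Fform {m k : ℕ} (A : Fin k → Matrix (Fin m) (Fin m) ℂ)
    (z ζ : Fin m → ℂ) : Fin k → ℂ :=
  fun j => hermInner ((A j).mulVec z) ζ

/-- The orthogonal complement `S^F` of a set `S ⊆ ℂ^m`. -/
noncomputable def orthF {m k : ℕ} (A : Fin k → Matrix (Fin m) (Fin m) ℂ)
    (S : Set (Fin m → ℂ)) : Set (Fin m → ℂ) :=
  {x | ∀ y ∈ S, Fform A x y = 0}

/-- The subspace `T(a,b) = {y : ∃ x, F(x,b) + F(a,y) = 0}`. -/
noncomputable def Tspace {m k : ℕ} (A : Fin k → Matrix (Fin m) (Fin m) ℂ)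
    (a b : Fin m → ℂ) : Set (Fin m → ℂ) :=
  {y | ∃ x, Fform A x b + Fform A a y = 0}

/-- `F` is nondegenerate: the `A_j` are `ℝ`-linearly independent, and
`F(z,ζ) = 0` for all `z` implies `ζ = 0`. -/
noncomputable def FNondeg {m k : ℕ} (A : Fin k → Matrix (Fin m) (Fin m) ℂ) : Prop :=
  LinearIndependent ℝ A ∧ ∀ ζ : Fin m → ℂ, (∀ z : Fin m → ℂ, Fform A z ζ = 0) → ζ = 0

/-- `F` is T-nondegenerate: for generic `a ∈ ℂ^m`, `T(a)^F = {0}`. -/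
noncomputable def TNondeg {m k : ℕ} (A : Fin k → Matrix (Fin m) (Fin m) ℂ) : Prop :=
  ∃ U : Set (Fin m → ℂ), IsOpen U ∧ Dense U ∧
    ∀ a ∈ U, orthF A (Tspace A a a) = {0}

/-!
For Hermitian `A_j` one has `F(ζ,z) = conj F(z,ζ)`, so `a^F ⊆ T(a)` (take `x = 0`); also
`a ∈ T(a)` (take `x = -a`). As `S ↦ S^F` is antitone, `T(a)^F ⊆ (a^F)^F ∩ a^F`, which is `{0}`
for generic `a`.
-/

theorem hermInner_eq_dotProduct_star {m : ℕ} (a b : Fin m → ℂ) :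
    hermInner a b = a ⬝ᵥ star b := rfl

section Fform

variable {m k : ℕ} {A : Fin k → Matrix (Fin m) (Fin m) ℂ}

@[simp]
theorem Fform_zero_left (ζ : Fin m → ℂ) : Fform A 0 ζ = 0 := by
  funext j
  simp [Fform, hermInner_eq_dotProduct_star]

@[simp]
theorem Fform_neg_left (z ζ : Fin m → ℂ) : Fform A (-z) ζ = -Fform A z ζ := by
  funext j
  simp [Fform, hermInner_eq_dotProduct_star, mulVec_neg]

theorem Fform_swap_of_isHermitian (hA : ∀ j, (A j).IsHermitian) (z ζ : Fin m → ℂ) :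
    Fform A ζ z = star (Fform A z ζ) := by
  funext j
  simp only [Fform, hermInner_eq_dotProduct_star, Pi.star_apply]
  rw [← dotProduct_star, star_mulVec, (hA j).eq, dotProduct_comm, dotProduct_mulVec,
    dotProduct_comm]

theorem Fform_eq_zero_comm_of_isHermitian (hA : ∀ j, (A j).IsHermitian) {z ζ : Fin m → ℂ} :
    Fform A z ζ = 0 ↔ Fform A ζ z = 0 := by
  rw [Fform_swap_of_isHermitian hA z ζ, star_eq_zero]

theorem orthF_antitone {S S' : Set (Fin m → ℂ)} (h : S ⊆ S') : orthF A S' ⊆ orthF A S :=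
  fun _ hx y hy => hx y (h hy)

theorem zero_mem_orthF (S : Set (Fin m → ℂ)) : (0 : Fin m → ℂ) ∈ orthF A S :=
  fun _ _ => Fform_zero_left _

theorem mem_Tspace_right (a b : Fin m → ℂ) : b ∈ Tspace A a b :=
  ⟨-a, by simp⟩

theorem mem_Tspace_of_Fform_eq_zero {a b y : Fin m → ℂ} (h : Fform A a y = 0) :
    y ∈ Tspace A a b :=
  ⟨0, by simp [h]⟩

theorem orthF_singleton_subset_Tspace (hA : ∀ j, (A j).IsHermitian) (a b : Fin m → ℂ) :
    orthF A {a} ⊆ Tspace A a b := fun _ hy =>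
  mem_Tspace_of_Fform_eq_zero ((Fform_eq_zero_comm_of_isHermitian hA).2 (hy a rfl))

theorem orthF_Tspace_self_subset (hA : ∀ j, (A j).IsHermitian) (a : Fin m → ℂ) :
    orthF A (Tspace A a a) ⊆ orthF A (orthF A {a}) ∩ orthF A {a} :=
  Set.subset_inter (orthF_antitone (orthF_singleton_subset_Tspace hA a a))
    (orthF_antitone (Set.singleton_subset_iff.2 (mem_Tspace_right a a)))

end Fform

theorem stmt6_general {m k : ℕ}
    (A : Fin k → Matrix (Fin m) (Fin m) ℂ) (hHerm : ∀ j, (A j).IsHermitian)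
    (h : ∃ U : Set (Fin m → ℂ), IsOpen U ∧ Dense U ∧
      ∀ a ∈ U, orthF A (orthF A {a}) ∩ orthF A {a} = {0}) :
    TNondeg A := by
  obtain ⟨U, hUopen, hUdense, hU⟩ := h
  refine ⟨U, hUopen, hUdense, fun a ha => ?_⟩
  refine Set.Subset.antisymm ?_ (Set.singleton_subset_iff.2 (zero_mem_orthF _))
  exact hU a ha ▸ orthF_Tspace_self_subset hHerm a

theorem stmt6 {m k : ℕ} (hm : 0 < m) (hk : 0 < k)
    (A : Fin k → Matrix (Fin m) (Fin m) ℂ) (hHerm : ∀ j, (A j).IsHermitian)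
    (h : ∃ U : Set (Fin m → ℂ), IsOpen U ∧ Dense U ∧
      ∀ a ∈ U, orthF A (orthF A {a}) ∩ orthF A {a} = {0}) :
    TNondeg A :=
  stmt6_general A hHerm h
end

section
/- Suppose F is nondegenerate and D-nondegenerate. Then F is T-nondegenerate. -/
open Matrix Complex

/-- The `k×k` matrix `B` with entries `B_{lj} = ⟪A_l A⁻¹ A_j a, a⟫`,
where `Amat = ∑ c_j A_j`. -/
noncomputable def Bmatrix {m k : ℕ} (A : Fin k → Matrix (Fin m) (Fin m) ℂ)
    (c : Fin k → ℝ) (a : Fin m → ℂ) : Matrix (Fin k) (Fin k) ℂ :=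
  fun l j => hermInner ((A l * (∑ i, (c i : ℂ) • A i)⁻¹ * A j).mulVec a) a

/-- `Re B = (B + conj B)/2` (entrywise conjugate). -/
noncomputable def ReB {m k : ℕ} (A : Fin k → Matrix (Fin m) (Fin m) ℂ)
    (c : Fin k → ℝ) (a : Fin m → ℂ) : Matrix (Fin k) (Fin k) ℂ :=
  (2 : ℂ)⁻¹ • (Bmatrix A c a + (Bmatrix A c a).map (starRingEnd ℂ))

/-- `F` is D-nondegenerate. -/
noncomputable def DNondeg {m k : ℕ} (A : Fin k → Matrix (Fin m) (Fin m) ℂ) : Prop :=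
  ∃ (c : Fin k → ℝ) (a : Fin m → ℂ),
    IsUnit (∑ i, (c i : ℂ) • A i) ∧ (ReB A c a).det ≠ 0

/-!
Fix `c` with `A = ∑ cⱼ Aⱼ` invertible and let `x ∈ T(a)^F`. Every `w` with `Re ⟨Aⱼ a, w⟩ = 0`
for all `j` lies in `T(a)`, so `Re ⟨Aⱼ x, w⟩ = 0` for all such `w`, i.e. `Aⱼ x` lies in the real
span of the `Aₚ a`. Hence `A x = ∑ tⱼ Aⱼ a` with `t` real. As `a ∈ T(a)`, `F(x, a) = 0`, which
says exactly `B t = 0`; since `t` is real also `(Re B) t = 0`, so `t = 0` and `x = 0` as soon as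
`Re B` is nonsingular. Finally `a ↦ det (Re B)` is real-analytic and not identically zero, so it
is nonzero on an open dense set.
-/

section HermInner

variable {m : ℕ}

theorem hermInner_eq_dotProduct (a b : Fin m → ℂ) : hermInner a b = a ⬝ᵥ star b := rfl

theorem hermInner_mulVec_comm {M : Matrix (Fin m) (Fin m) ℂ} (hM : M.IsHermitian)
    (u v : Fin m → ℂ) :
    hermInner (M *ᵥ u) v = starRingEnd ℂ (hermInner (M *ᵥ v) u) := by
  simp only [hermInner_eq_dotProduct]
  rw [dotProduct_star, star_mulVec, hM.eq, dotProduct_comm, ← dotProduct_mulVec, dotProduct_comm]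
  rfl

theorem exists_re_hermInner_eq (φ : (Fin m → ℂ) →ₗ[ℝ] ℝ) :
    ∃ w : Fin m → ℂ, ∀ u, (hermInner u w).re = φ u := by
  refine ⟨fun t => φ (Pi.single t 1) + φ (Pi.single t I) * I, fun u => ?_⟩
  have hu : ∀ t, Pi.single t (u t) =
      (u t).re • (Pi.single t 1 : Fin m → ℂ) + (u t).im • (Pi.single t I : Fin m → ℂ) := by
    intro t
    rw [← Pi.single_smul, ← Pi.single_smul, ← Pi.single_add]
    simp [Complex.re_add_im]
  conv_rhs => rw [← Finset.univ_sum_single u, map_sum]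
  simp only [hu, map_add, map_smul, hermInner, Complex.re_sum]
  refine Finset.sum_congr rfl fun t _ => ?_
  simp

end HermInner

-- `Re ⟨·, ·⟩` is a real inner product on `ℂ^m`, and this is `V = Vᗮᗮ`.
theorem Submodule.mem_of_forall_re_hermInner_eq_zero {m : ℕ} {V : Submodule ℝ (Fin m → ℂ)}
    {y : Fin m → ℂ} (h : ∀ w, (∀ v ∈ V, (hermInner v w).re = 0) → (hermInner y w).re = 0) :
    y ∈ V := by
  by_contra hy
  obtain ⟨φ, hφy, hφV⟩ := V.exists_dual_map_eq_bot_of_notMem hy inferInstance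
  obtain ⟨w, hw⟩ := exists_re_hermInner_eq φ
  refine hφy ?_
  rw [← hw]
  refine h w fun v hv => ?_
  rw [hw, ← Submodule.mem_bot ℝ, ← hφV]
  exact Submodule.mem_map_of_mem hv

section TSpace

variable {m k : ℕ} {A : Fin k → Matrix (Fin m) (Fin m) ℂ}

theorem self_mem_Tspace (a : Fin m → ℂ) :
    a ∈ Tspace A a a :=
  ⟨-a, by ext j; simp [Fform, hermInner_eq_dotProduct, mulVec_neg]⟩

theorem mem_Tspace_self_of_re_eq_zero (hA : ∀ j, (A j).IsHermitian) {a w : Fin m → ℂ}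
    (hw : ∀ j, (hermInner (A j *ᵥ a) w).re = 0) : w ∈ Tspace A a a := by
  refine ⟨w, funext fun j => ?_⟩
  simp only [Fform, Pi.add_apply, Pi.zero_apply]
  rw [hermInner_mulVec_comm (hA j) w, add_comm, Complex.add_conj, hw j]
  simp

theorem mulVec_mem_span_of_mem_orthF_Tspace (hA : ∀ j, (A j).IsHermitian) {a x : Fin m → ℂ}
    (hx : x ∈ orthF A (Tspace A a a)) (j : Fin k) :
    A j *ᵥ x ∈ Submodule.span ℝ (Set.range fun p => A p *ᵥ a) := by
  refine Submodule.mem_of_forall_re_hermInner_eq_zero fun w hw => ?_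
  have hwT : w ∈ Tspace A a a :=
    mem_Tspace_self_of_re_eq_zero hA fun p => hw _ (Submodule.subset_span ⟨p, rfl⟩)
  rw [show hermInner (A j *ᵥ x) w = 0 from congrFun (hx w hwT) j, Complex.zero_re]

end TSpace

section BMatrix

variable {m k : ℕ} {A : Fin k → Matrix (Fin m) (Fin m) ℂ} {c : Fin k → ℝ} {a : Fin m → ℂ}

theorem Bmatrix_mulVec_eq_Fform (hU : IsUnit (∑ i, (c i : ℂ) • A i)) {x : Fin m → ℂ}
    {t : Fin k → ℂ} (ht : ∑ j, t j • (A j *ᵥ a) = (∑ i, (c i : ℂ) • A i) *ᵥ x) :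
    Bmatrix A c a *ᵥ t = Fform A x a := by
  set S : Matrix (Fin m) (Fin m) ℂ := ∑ i, (c i : ℂ) • A i
  ext l
  calc (Bmatrix A c a *ᵥ t) l
      = (∑ j, (A l * S⁻¹) *ᵥ (t j • (A j *ᵥ a))) ⬝ᵥ star a := by
        change ∑ j, Bmatrix A c a l j * t j = _
        rw [sum_dotProduct]
        refine Finset.sum_congr rfl fun j _ => ?_
        rw [mulVec_smul, smul_dotProduct, mulVec_mulVec, smul_eq_mul, mul_comm]
        rfl
    _ = hermInner (A l *ᵥ x) a := by
        rw [← mulVec_sum, ht, mulVec_mulVec, Matrix.mul_assoc,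
          nonsing_inv_mul _ ((isUnit_iff_isUnit_det S).mp hU), Matrix.mul_one]
        rfl

theorem ReB_mulVec_ofReal_eq_zero {t : Fin k → ℝ}
    (ht : Bmatrix A c a *ᵥ (fun j => (t j : ℂ)) = 0) :
    ReB A c a *ᵥ (fun j => (t j : ℂ)) = 0 := by
  have hconj : (Bmatrix A c a).map (starRingEnd ℂ) *ᵥ (fun j => (t j : ℂ)) = 0 := by
    ext l
    simpa [ht, Function.comp_def] using
      (RingHom.map_mulVec (starRingEnd ℂ) (Bmatrix A c a) (fun j => (t j : ℂ)) l).symm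
  rw [ReB, smul_mulVec, add_mulVec, ht, hconj, add_zero, smul_zero]

end BMatrix

theorem orthF_Tspace_self_eq_singleton_zero {m k : ℕ} {A : Fin k → Matrix (Fin m) (Fin m) ℂ}
    (hA : ∀ j, (A j).IsHermitian) {c : Fin k → ℝ} (hU : IsUnit (∑ i, (c i : ℂ) • A i))
    {a : Fin m → ℂ} (hdet : (ReB A c a).det ≠ 0) :
    orthF A (Tspace A a a) = {0} := by
  set S : Matrix (Fin m) (Fin m) ℂ := ∑ i, (c i : ℂ) • A i
  refine Set.eq_singleton_iff_unique_mem.mpr ⟨fun y _ => ?_, fun x hx => ?_⟩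
  · ext j
    simp [Fform, hermInner_eq_dotProduct]
  have hspan : S *ᵥ x ∈ Submodule.span ℝ (Set.range fun p => A p *ᵥ a) := by
    rw [sum_mulVec]
    refine Submodule.sum_mem _ fun i _ => ?_
    rw [smul_mulVec]
    exact algebraMap_smul ℂ (c i) (A i *ᵥ x) ▸
      Submodule.smul_mem _ _ (mulVec_mem_span_of_mem_orthF_Tspace hA hx i)
  obtain ⟨t, ht⟩ := (Submodule.mem_span_range_iff_exists_fun ℝ).mp hspan
  replace ht : ∑ j, (t j : ℂ) • (A j *ᵥ a) = S *ᵥ x := by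
    rw [← ht]
    exact Finset.sum_congr rfl fun j _ => algebraMap_smul ℂ (t j) _
  have hBt : Bmatrix A c a *ᵥ (fun j => (t j : ℂ)) = 0 := by
    rw [Bmatrix_mulVec_eq_Fform hU ht]
    exact hx a (self_mem_Tspace a)
  have ht0 : (fun j => (t j : ℂ)) = 0 :=
    eq_zero_of_mulVec_eq_zero hdet (ReB_mulVec_ofReal_eq_zero hBt)
  have hSx : S *ᵥ x = 0 := by
    rw [← ht]
    simp [funext_iff.mp ht0]
  exact eq_zero_of_mulVec_eq_zero ((isUnit_iff_isUnit_det S).mp hU).ne_zero hSx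

theorem AnalyticAt.matrix_det {𝕜 E R n : Type*} [NontriviallyNormedField 𝕜]
    [NormedAddCommGroup E] [NormedSpace 𝕜 E] [NormedCommRing R] [NormedAlgebra 𝕜 R]
    [Fintype n] [DecidableEq n] {f : E → Matrix n n R} {z : E}
    (hf : ∀ i j, AnalyticAt 𝕜 (fun x => f x i j) z) : AnalyticAt 𝕜 (fun x => (f x).det) z := by
  simp only [det_apply']
  exact Finset.analyticAt_fun_sum _ fun σ _ =>
    analyticAt_const.mul (Finset.analyticAt_fun_prod _ fun i _ => hf _ _)

theorem AnalyticOnNhd.dense_setOf_ne_zero {𝕜 E F : Type*} [NontriviallyNormedField 𝕜]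
    [NormedAddCommGroup E] [NormedSpace 𝕜 E] [PreconnectedSpace E]
    [NormedAddCommGroup F] [NormedSpace 𝕜 F] {f : E → F} (hf : AnalyticOnNhd 𝕜 f Set.univ)
    {a₀ : E} (h₀ : f a₀ ≠ 0) : Dense {a | f a ≠ 0} := by
  refine interior_eq_empty_iff_dense_compl.mp (Set.eq_empty_of_forall_notMem fun z hz => h₀ ?_)
  exact hf.eqOn_zero_of_preconnected_of_eventuallyEq_zero isPreconnected_univ (Set.mem_univ z)
    (mem_interior_iff_mem_nhds.mp hz) (Set.mem_univ a₀)

theorem analyticAt_hermInner_mulVec_self {m : ℕ} (N : Matrix (Fin m) (Fin m) ℂ)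
    (z : Fin m → ℂ) : AnalyticAt ℝ (fun a => hermInner (N *ᵥ a) a) z := by
  have hcoord (p : Fin m) : AnalyticAt ℝ (fun a : Fin m → ℂ => a p) z :=
    (ContinuousLinearMap.proj p : (Fin m → ℂ) →L[ℝ] ℂ).analyticAt z
  have hconj (p : Fin m) : AnalyticAt ℝ (fun a : Fin m → ℂ => starRingEnd ℂ (a p)) z :=
    (Complex.conjCLE.toContinuousLinearMap.analyticAt _).comp (hcoord p)
  exact Finset.analyticAt_fun_sum _ fun t _ =>
    (Finset.analyticAt_fun_sum _ fun p _ => analyticAt_const.mul (hcoord p)).mul (hconj t)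

theorem analyticAt_det_ReB {m k : ℕ} (A : Fin k → Matrix (Fin m) (Fin m) ℂ) (c : Fin k → ℝ)
    (z : Fin m → ℂ) : AnalyticAt ℝ (fun a => (ReB A c a).det) z := by
  refine AnalyticAt.matrix_det fun l j => ?_
  have hB : AnalyticAt ℝ (fun a => Bmatrix A c a l j) z := analyticAt_hermInner_mulVec_self _ z
  exact analyticAt_const.mul (hB.add ((Complex.conjCLE.toContinuousLinearMap.analyticAt _).comp hB))

theorem stmt9_general {m k : ℕ}
    (A : Fin k → Matrix (Fin m) (Fin m) ℂ) (hHerm : ∀ j, (A j).IsHermitian)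
    (hD : DNondeg A) :
    TNondeg A := by
  obtain ⟨c, a₀, hU, hdet₀⟩ := hD
  have hdet : AnalyticOnNhd ℝ (fun a => (ReB A c a).det) Set.univ :=
    fun z _ => analyticAt_det_ReB A c z
  exact ⟨{a | (ReB A c a).det ≠ 0}, isOpen_ne_fun hdet.continuous continuous_const,
    hdet.dense_setOf_ne_zero hdet₀, fun a ha => orthF_Tspace_self_eq_singleton_zero hHerm hU ha⟩

theorem stmt9 {m k : ℕ} (hm : 0 < m) (hk : 0 < k)
    (A : Fin k → Matrix (Fin m) (Fin m) ℂ) (hHerm : ∀ j, (A j).IsHermitian)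
    (hnd : FNondeg A) (hD : DNondeg A) :
    TNondeg A :=
  stmt9_general A hHerm hD
end
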